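/- Let F be a cellular automaton with diameter s over A^ℕ via local rule f, and let u ∈ A^s. If 𝔡_L(u^∞, F(u^∞)) = 0, then there exists k ∈ {0, 1, …, s−1} such that F(u^∞) = σ^k(u^∞), where u^∞ denotes the periodic infinite word u u u ⋯. -/

import Mathlib

open Filter

/-- The finite factor `x_[i, i+n)` of the infinite word `x`. -/
def factor {A : Type*} (x : ℕ → A) (i n : ℕ) : List A := List.ofFn (fun k : Fin n => x (i + k))

/-- The shift map `σ` on infinite words. -/
def shift {A : Type*} (x : ℕ → A) : ℕ → A := fun i => x (i + 1)
/-- The maximal length of a common (not necessarily contiguous) subsequence of `u` and `v`. -/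
noncomputable def lcs {A : Type*} (u v : List A) : ℕ :=
  sSup {n | ∃ w : List A, w.length = n ∧ w.Sublist u ∧ w.Sublist v}

/-- The (halved) Levenshtein distance `d_L(u,v) = (|u|+|v|)/2 - ℓ(u,v)`. -/
noncomputable def levD {A : Type*} (u v : List A) : ℝ :=
  ((u.length : ℝ) + v.length) / 2 - lcs u v

/-- The Feldman pseudometric `𝔡_L`. -/
noncomputable def feld {A : Type*} (x y : ℕ → A) : ℝ :=
  limsup (fun l : ℕ => levD (factor x 0 l) (factor y 0 l) / l) atTop

/-- The `s`-periodic infinite word `u^∞` determined by `u ∈ A^s`. -/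
def perWord {A : Type*} {s : ℕ} (hs : 0 < s) (u : Fin s → A) : ℕ → A :=
  fun i => u ⟨i % s, Nat.mod_lt i hs⟩

/-!
Both `x = u^∞` and `y = F(x)` are `s`-periodic. If `y` is none of the shifts `σ^k x`, `k < s`,
then no `s` consecutive letters of `x` and of `y` can agree, whatever the two starting points:
the agreement would propagate by periodicity and make `y` a shift of `x`. A common subsequence
of `x_[0,L)` and `y_[0,L)` therefore cannot follow a diagonal for `s` consecutive steps, so
every `s` matched letters cost at least one skipped letter, and `d_L(x_[0,L), y_[0,L))` grows
at least linearly in `L`.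
-/

open Function Filter

def NoDiagonalRun (P : ℕ → ℕ → Prop) (s : ℕ) : Prop :=
  ∀ i j, ∃ e < s, ¬ P (i + e) (j + e)

lemma NoDiagonalRun.pos {P : ℕ → ℕ → Prop} {s : ℕ} (hP : NoDiagonalRun P s) : 0 < s := by
  obtain ⟨e, he, -⟩ := hP 0 0
  omega

section Words

variable {A : Type*}

lemma shift_iterate_apply (k : ℕ) (x : ℕ → A) (n : ℕ) : shift^[k] x n = x (n + k) := by
  induction k generalizing x with
  | zero => rfl
  | succ k ih => rw [Function.iterate_succ_apply, ih]; rfl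

lemma perWord_periodic {s : ℕ} (hs : 0 < s) (u : Fin s → A) : Periodic (perWord hs u) s :=
  fun n => by simp [perWord]

lemma Function.Periodic.image_ca {d p : ℕ} {x : ℕ → A} (hx : Periodic x p)
    {f : (Fin d → A) → A} {F : (ℕ → A) → ℕ → A}
    (hF : ∀ (x : ℕ → A) (i : ℕ), F x i = f (fun k => x (i + k))) : Periodic (F x) p :=
  fun n => by
    simp only [hF, add_right_comm n p, hx _]

lemma Function.Periodic.shift_iterate_mod {s : ℕ} {x : ℕ → A} (hx : Periodic x s) (k : ℕ) :
    shift^[k % s] x = shift^[k] x := by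
  funext n
  rw [shift_iterate_apply, shift_iterate_apply, ← hx.nat_mul (k / s) (n + k % s), Nat.cast_id,
    add_assoc, Nat.mod_add_div']

lemma noDiagonalRun_of_forall_ne_shift_iterate {s : ℕ} (hs : 0 < s) {x y : ℕ → A}
    (hx : Periodic x s) (hy : Periodic y s) (h : ∀ k < s, y ≠ shift^[k] x) :
    NoDiagonalRun (fun i j => x i = y j) s := by
  intro i j
  by_contra! hrun
  have hagree : ∀ n, x (i + n) = y (j + n) := fun n => by
    rw [← (hx.const_add i).map_mod_nat, ← (hy.const_add j).map_mod_nat]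
    exact hrun _ (Nat.mod_lt n hs)
  -- `j + (i + (s - 1) * j) ≡ i [MOD s]`, so `y` is the shift of `x` by `i + (s - 1) * j`
  obtain ⟨r, rfl⟩ : ∃ r, s = r + 1 := ⟨s - 1, by omega⟩
  refine h _ (Nat.mod_lt (i + r * j) hs) ((funext fun n => ?_).trans (hx.shift_iterate_mod _).symm)
  calc y n = y (j + (n + r * j)) := by rw [← hy.nat_mul j n, Nat.cast_id]; ring_nf
    _ = shift^[i + r * j] x n := by rw [← hagree, shift_iterate_apply]; ring_nf

end Words

section Matching

variable {P : ℕ → ℕ → Prop} {s m : ℕ} {I J : ℕ → ℕ}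

lemma add_add_two_mul_lt_of_matched (hP : NoDiagonalRun P s)
    (hI : StrictMono I) (hJ : StrictMono J) (hmatch : ∀ t < m, P (I t) (J t))
    {t : ℕ} (ht : t + s ≤ m) : I t + J t + 2 * s < I (t + s) + J (t + s) := by
  by_contra! hle
  -- the slack of only `2 * s` forces `I` and `J` to advance by exactly one at each step from `t`
  obtain ⟨e, he, hne⟩ := hP (I t) (J t)
  have hI₁ := hI.add_le_nat e t
  have hI₂ := hI.add_le_nat (s - e) (e + t)
  have hJ₁ := hJ.add_le_nat e t
  have hJ₂ := hJ.add_le_nat (s - e) (e + t)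
  rw [show s - e + (e + t) = t + s by omega] at hI₂ hJ₂
  have hdiag : I (e + t) = I t + e ∧ J (e + t) = J t + e := by omega
  rw [← hdiag.1, ← hdiag.2] at hne
  exact hne (hmatch _ (by omega))

lemma div_add_two_mul_le_of_matched (hP : NoDiagonalRun P s)
    (hI : StrictMono I) (hJ : StrictMono J) (hmatch : ∀ t < m, P (I t) (J t)) :
    ∀ n ≤ m, n / s + 2 * n ≤ I n + J n := by
  have hs := hP.pos
  intro n
  induction n using Nat.strong_induction_on with
  | _ n ih =>
    intro hn
    rcases lt_or_ge n s with hns | hns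
    · have := hI.le_apply (x := n)
      have := hJ.le_apply (x := n)
      rw [Nat.div_eq_of_lt hns]
      omega
    · obtain ⟨t, rfl⟩ : ∃ t, n = t + s := ⟨n - s, by omega⟩
      have := ih t (by omega) (by omega)
      have := add_add_two_mul_lt_of_matched hP hI hJ hmatch hn
      rw [Nat.add_div_right t hs]
      omega

end Matching

theorem List.Sublist.exists_strictMono_getElem?_eq {α : Type*} {l l' : List α} (h : l.Sublist l') :
    ∃ f : ℕ → ℕ, StrictMono f ∧ f l.length = l'.length ∧ ∀ i < l.length, l[i]? = l'[f i]? := by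
  obtain ⟨f, hf⟩ := List.sublist_iff_exists_orderEmbedding_getElem?_eq.1 h
  have hlt : ∀ i < l.length, f i < l'.length := fun i hi => by
    have hfi := hf i
    rw [List.getElem?_eq_getElem hi, eq_comm, List.getElem?_eq_some_iff] at hfi
    exact hfi.1
  refine ⟨fun i => if i < l.length then f i else i + l'.length - l.length, ?_, by simp,
    fun i hi => by simpa only [hi, ↓reduceIte] using hf i⟩
  intro i j hij
  dsimp only
  split_ifs with hi hj hj
  · exact f.strictMono hij
  · have := hlt i hi
    omega
  · omega
  · omega

section Levenshtein

variable {A : Type*}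

lemma factor_length (x : ℕ → A) (i n : ℕ) : (factor x i n).length = n := by
  simp [factor]

lemma getElem?_factor (x : ℕ → A) {i n k : ℕ} (hk : k < n) : (factor x i n)[k]? = some (x (i + k)) := by
  simp [factor, hk]

lemma exists_sublist_length_eq_lcs (u v : List A) :
    ∃ w : List A, w.length = lcs u v ∧ w.Sublist u ∧ w.Sublist v :=
  Nat.sSup_mem (s := {n | ∃ w : List A, w.length = n ∧ w.Sublist u ∧ w.Sublist v})
    ⟨0, [], rfl, List.nil_sublist _, List.nil_sublist _⟩
    ⟨u.length, fun _ ⟨_, hw, hwu, _⟩ => hw ▸ hwu.length_le⟩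

lemma levD_factor (x y : ℕ → A) (L : ℕ) :
    levD (factor x 0 L) (factor y 0 L) = L - lcs (factor x 0 L) (factor y 0 L) := by
  rw [levD, factor_length, factor_length]
  ring

lemma levD_factor_div_le_one (x y : ℕ → A) (L : ℕ) :
    levD (factor x 0 L) (factor y 0 L) / L ≤ 1 := by
  rw [levD_factor]
  rcases L.eq_zero_or_pos with rfl | hL
  · simp
  · rw [div_le_one (by exact_mod_cast hL)]
    linarith [(lcs (factor x 0 L) (factor y 0 L)).cast_nonneg (α := ℝ)]

variable {s : ℕ} {x y : ℕ → A}

lemma lcs_factor_div_add_two_mul_le (hP : NoDiagonalRun (fun i j => x i = y j) s) (L : ℕ) :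
    lcs (factor x 0 L) (factor y 0 L) / s + 2 * lcs (factor x 0 L) (factor y 0 L) ≤ 2 * L := by
  obtain ⟨w, hw, hwx, hwy⟩ := exists_sublist_length_eq_lcs (factor x 0 L) (factor y 0 L)
  obtain ⟨I, hI, hIm, hIw⟩ := hwx.exists_strictMono_getElem?_eq
  obtain ⟨J, hJ, hJm, hJw⟩ := hwy.exists_strictMono_getElem?_eq
  rw [factor_length] at hIm hJm
  have hmatch : ∀ t < w.length, x (I t) = y (J t) := fun t ht => by
    have hxy := (hIw t ht).symm.trans (hJw t ht)
    rwa [getElem?_factor x (hIm ▸ hI ht), getElem?_factor y (hJm ▸ hJ ht), zero_add, zero_add,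
      Option.some_inj] at hxy
  have := div_add_two_mul_le_of_matched hP hI hJ hmatch _ le_rfl
  rw [hIm, hJm, hw] at this
  omega

lemma one_div_le_levD_factor_div (hP : NoDiagonalRun (fun i j => x i = y j) s) {L : ℕ}
    (hL : 2 * s ≤ L) :
    1 / (2 * (2 * s + 1)) ≤ levD (factor x 0 L) (factor y 0 L) / L := by
  have hs := hP.pos
  have hmL := lcs_factor_div_add_two_mul_le hP L
  rw [levD_factor]
  generalize lcs (factor x 0 L) (factor y 0 L) = m at hmL ⊢
  have hmL' : m ≤ L := by linarith [Nat.zero_le (m / s)]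
  have hm : m < s * (2 * (L - m) + 1) :=
    (Nat.lt_mul_div_succ m hs).trans_le (Nat.mul_le_mul_left s (by omega))
  have hm' : (m : ℝ) < s * (2 * ((L : ℝ) - m) + 1) := by
    rw [← Nat.cast_sub hmL']
    exact_mod_cast hm
  have hLr : 2 * (s : ℝ) ≤ L := by exact_mod_cast hL
  have hs' : (1 : ℝ) ≤ s := by exact_mod_cast hs
  rw [div_le_div_iff₀ (by positivity) (by linarith)]
  nlinarith

theorem feld_pos (hP : NoDiagonalRun (fun i j => x i = y j) s) :
    0 < feld x y := by
  have hlower : ∀ᶠ L in atTop, (1 / (2 * (2 * s + 1)) : ℝ) ≤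
      levD (factor x 0 L) (factor y 0 L) / L :=
    eventually_atTop.2 ⟨2 * s, fun L hL => one_div_le_levD_factor_div hP hL⟩
  have hbdd : IsBoundedUnder (· ≤ ·) atTop
      (fun L : ℕ => levD (factor x 0 L) (factor y 0 L) / L) :=
    isBoundedUnder_of ⟨1, levD_factor_div_le_one x y⟩
  exact (by positivity : (0 : ℝ) < 1 / (2 * (2 * s + 1))).trans_le
    (le_limsup_of_frequently_le hlower.frequently hbdd)

end Levenshtein

/-- Let `F` be a CA with diameter `s` and local rule `f`, and `u ∈ A^s`.
If `𝔡_L(u^∞, F(u^∞)) = 0` then `F(u^∞) = σ^k(u^∞)` for some `k < s`. -/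
theorem ca_feld_periodic_shift {A : Type*} (s : ℕ) (hs : 0 < s)
    (f : (Fin s → A) → A) (F : (ℕ → A) → ℕ → A)
    (hF : ∀ (x : ℕ → A) (i : ℕ), F x i = f (fun k => x (i + k)))
    (u : Fin s → A) (h : feld (perWord hs u) (F (perWord hs u)) = 0) :
    ∃ k < s, F (perWord hs u) = shift^[k] (perWord hs u) := by
  by_contra! hshift
  have hx := perWord_periodic hs u
  exact (feld_pos (noDiagonalRun_of_forall_ne_shift_iterate hs hx (hx.image_ca hF) hshift)).ne' h
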